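/- arXiv:2303.17023 — 2 statements merged into one kernel-verified Lean document; each statement's English description precedes it below -/
import Mathlib

section
/- There exists a constant C > 0 such that for every integer n ≥ 3, the minimum over all pairs of incomparable cells c₁, c₂ of the shape (n,n) of the absolute value of the sorting probability |SP((n,n),c₁,c₂)| is at most C/n; in fact it is at most 3/(2n−1). (In other words, the minimal sorting probability of the Catalan poset is O(1/n).) -/
open Filter Topology

/-- The length of the `i`-th row (1-indexed) of the shape given by the list `lam`. -/
def rowLen (lam : List ℕ) (i : ℕ) : ℕ := lam.getD (i - 1) 0

/-- The cells of the Young diagram of shape `lam`, with 1-indexed rows and columns: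
`(i,j)` is a cell iff `1 ≤ i ≤ k` and `1 ≤ j ≤ lam_i`. -/
def cells (lam : List ℕ) : Set (ℕ × ℕ) :=
  {c | 1 ≤ c.1 ∧ c.1 ≤ lam.length ∧ 1 ≤ c.2 ∧ c.2 ≤ rowLen lam c.1}

/-- `T` is a standard Young tableau of shape `lam`: it fills the cells of the diagram
bijectively with `1,…,n` (where `n = |lam|`), is `0` outside the diagram, and increases
along rows and down columns. -/
def IsSYT (lam : List ℕ) (T : ℕ × ℕ → ℕ) : Prop :=
  (∀ c, c ∉ cells lam → T c = 0) ∧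
  Set.BijOn T (cells lam) (Set.Icc 1 lam.sum) ∧
  (∀ i j, (i, j) ∈ cells lam → (i, j + 1) ∈ cells lam → T (i, j) < T (i, j + 1)) ∧
  (∀ i j, (i, j) ∈ cells lam → (i + 1, j) ∈ cells lam → T (i, j) < T (i + 1, j))

/-- The number `f^lam` of standard Young tableaux of shape `lam`. -/
noncomputable def sytCount (lam : List ℕ) : ℕ := {T | IsSYT lam T}.ncard

/-- The probability that a uniformly random standard Young tableau of shape `lam`
satisfies the predicate `P`. -/
noncomputable def sytProb (lam : List ℕ) (P : (ℕ × ℕ → ℕ) → Prop) : ℝ :=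
  ({T | IsSYT lam T ∧ P T}.ncard : ℝ) / (sytCount lam : ℝ)

/-- The sorting probability `SP(lam, c₁, c₂) = Pr(T(c₁) > T(c₂)) - Pr(T(c₂) > T(c₁))`. -/
noncomputable def SP (lam : List ℕ) (c1 c2 : ℕ × ℕ) : ℝ :=
  sytProb lam (fun T => T c2 < T c1) - sytProb lam (fun T => T c1 < T c2)

/-- The set of absolute values of sorting probabilities over all pairs of incomparable
cells of the shape `lam`. Two cells `c₁ = (i₁,j₁)` and `c₂ = (i₂,j₂)` are incomparable
iff `(i₁−i₂)(j₁−j₂) < 0`. -/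
noncomputable def sortingProbSet (lam : List ℕ) : Set ℝ :=
  {x | ∃ c1 c2 : ℕ × ℕ, c1 ∈ cells lam ∧ c2 ∈ cells lam ∧
    ((c1.1 : ℤ) - (c2.1 : ℤ)) * ((c1.2 : ℤ) - (c2.2 : ℤ)) < 0 ∧ x = |SP lam c1 c2|}

lemma mem_cells_pair {a b : ℕ} {c : ℕ × ℕ} :
    c ∈ cells [a, b] ↔ (c.1 = 1 ∧ 1 ≤ c.2 ∧ c.2 ≤ a) ∨ (c.1 = 2 ∧ 1 ≤ c.2 ∧ c.2 ≤ b) := by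
  obtain ⟨i, j⟩ := c
  simp only [cells, rowLen, Set.mem_setOf_eq, List.length_cons, List.length_nil]
  constructor
  · rintro ⟨h1, h2, h3, h4⟩
    interval_cases i
    · left; simpa using ⟨h3, h4⟩
    · right; simpa using ⟨h3, h4⟩
  · rintro (⟨rfl, h3, h4⟩ | ⟨rfl, h3, h4⟩) <;> simp_all <;> omega

lemma cells_pair_finite (a b : ℕ) : (cells [a, b]).Finite := by
  apply Set.Finite.subset (Set.finite_Icc ((1:ℕ),(1:ℕ)) (2, a + b))
  rintro ⟨i, j⟩ h
  rcases mem_cells_pair.1 h with ⟨rfl, h1, h2⟩ | ⟨rfl, h1, h2⟩ <;>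
    simp [Set.mem_Icc, Prod.le_def] <;> omega

lemma le_foldr_max {l : List ℕ} {x : ℕ} (h : x ∈ l) : x ≤ l.foldr max 0 := by
  induction l with
  | nil => simp at h
  | cons y ys ih =>
    rcases List.mem_cons.1 h with rfl | hm
    · exact le_max_left _ _
    · exact le_trans (ih hm) (le_max_right _ _)

lemma cells_finite (lam : List ℕ) : (cells lam).Finite := by
  apply Set.Finite.subset (Set.finite_Icc ((1:ℕ),(1:ℕ)) (lam.length, lam.foldr max 0))
  rintro ⟨i, j⟩ ⟨h1, h2, h3, h4⟩
  simp only [Set.mem_Icc, Prod.le_def]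
  refine ⟨⟨h1, h3⟩, h2, le_trans h4 ?_⟩
  simp only [rowLen]
  rcases Nat.lt_or_ge (i-1) lam.length with h | h
  · rw [List.getD_eq_getElem _ _ h]
    exact le_foldr_max (List.getElem_mem h)
  · rw [List.getD_eq_default _ _ h]; exact Nat.zero_le _

lemma syt_finite (lam : List ℕ) : {T | IsSYT lam T}.Finite := by
  have hc : (cells lam).Finite := cells_finite lam
  have : Finite ↥(cells lam) := hc.to_subtype
  set ρ : (ℕ × ℕ → ℕ) → (↥(cells lam) → ℕ) := fun T c => T c with hρ
  apply Set.Finite.of_finite_image (f := ρ)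
  · apply Set.Finite.subset (Set.Finite.pi (t := fun _ : ↥(cells lam) => Set.Iic lam.sum)
      (fun _ => Set.finite_Iic _))
    rintro f ⟨T, hT, rfl⟩
    intro c _
    exact (hT.2.1.mapsTo c.2).2
  · intro T1 h1 T2 h2 he
    funext c
    by_cases hc' : c ∈ cells lam
    · exact congrFun he ⟨c, hc'⟩
    · rw [h1.1 c hc', h2.1 c hc']

lemma erase_injOn (c₀ : ℕ × ℕ) (s : ℕ) :
    Set.InjOn (fun T => Function.update T c₀ 0) {T : ℕ × ℕ → ℕ | T c₀ = s} := by
  intro T1 h1 T2 h2 he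
  funext c
  by_cases hc : c = c₀
  · subst hc; rw [h1, h2]
  · have := congrFun he c
    simpa [Function.update_of_ne hc] using this

lemma erase_image (lamS lamB : List ℕ) (c₀ : ℕ × ℕ)
    (hcells : cells lamS = cells lamB \ {c₀})
    (hc₀ : c₀ ∈ cells lamB)
    (hsum : lamS.sum + 1 = lamB.sum)
    (hr : (c₀.1, c₀.2 + 1) ∉ cells lamB)
    (hd : (c₀.1 + 1, c₀.2) ∉ cells lamB)
    (Q : (ℕ × ℕ → ℕ) → Prop)
    (hQ : ∀ T v, Q (Function.update T c₀ v) ↔ Q T) :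
    (fun T => Function.update T c₀ 0) '' {T | IsSYT lamB T ∧ T c₀ = lamB.sum ∧ Q T} =
      {T | IsSYT lamS T ∧ Q T} := by
  have hc₀S : c₀ ∉ cells lamS := by rw [hcells]; simp
  have hSsubB : cells lamS ⊆ cells lamB := by rw [hcells]; exact Set.diff_subset
  have hmemS : ∀ c, c ∈ cells lamS ↔ c ∈ cells lamB ∧ c ≠ c₀ := by
    intro c; rw [hcells]; simp [Set.mem_diff]
  ext T'
  simp only [Set.mem_image, Set.mem_setOf_eq]
  constructor
  · rintro ⟨T, ⟨⟨hz, hbij, hrow, hcol⟩, hval, hQT⟩, rfl⟩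
    have hEq : Set.EqOn (Function.update T c₀ 0) T (cells lamS) := by
      intro c hc
      exact Function.update_of_ne ((hmemS c).1 hc).2 _ _
    refine ⟨⟨?_, ?_, ?_, ?_⟩, (hQ T 0).2 hQT⟩
    · intro c hc
      by_cases h : c = c₀
      · subst h; simp
      · rw [Function.update_of_ne h]
        exact hz c (fun hcB => hc ((hmemS c).2 ⟨hcB, h⟩))
    · have hbij' : Set.BijOn T (cells lamS) (Set.Icc 1 lamS.sum) := by
        refine ⟨?_, hbij.injOn.mono hSsubB, ?_⟩
        · intro c hc
          have h1 := hbij.mapsTo (hSsubB hc)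
          simp only [Set.mem_Icc] at h1 ⊢
          refine ⟨h1.1, ?_⟩
          have hne : T c ≠ lamB.sum := by
            intro h
            exact ((hmemS c).1 hc).2 (hbij.injOn (hSsubB hc) hc₀ (h.trans hval.symm))
          omega
        · intro v hv
          simp only [Set.mem_Icc] at hv
          have hv' : v ∈ Set.Icc 1 lamB.sum := by simp only [Set.mem_Icc]; omega
          obtain ⟨c, hc, hcv⟩ := hbij.surjOn hv'
          refine ⟨c, (hmemS c).2 ⟨hc, ?_⟩, hcv⟩
          intro h; subst h; rw [hval] at hcv; omega
      exact Set.BijOn.congr hbij' (fun c hc => (hEq hc).symm)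
    · intro i j h1 h2
      rw [hEq h1, hEq h2]
      exact hrow i j (hSsubB h1) (hSsubB h2)
    · intro i j h1 h2
      rw [hEq h1, hEq h2]
      exact hcol i j (hSsubB h1) (hSsubB h2)
  · rintro ⟨⟨hz, hbij, hrow, hcol⟩, hQT⟩
    have hT'c₀ : T' c₀ = 0 := hz c₀ hc₀S
    have hs1 : 1 ≤ lamB.sum := by omega
    refine ⟨Function.update T' c₀ lamB.sum, ⟨⟨?_, ⟨?_, ?_, ?_⟩, ?_, ?_⟩, ?_, ?_⟩, ?_⟩
    · -- zero off cells lamB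
      intro c hc
      have hne : c ≠ c₀ := fun h => hc (h ▸ hc₀)
      rw [Function.update_of_ne hne]
      exact hz c (fun hcS => hc (hSsubB hcS))
    · -- mapsTo
      intro c hc
      by_cases h : c = c₀
      · subst h; simp [Set.mem_Icc, hs1]
      · rw [Function.update_of_ne h]
        have hcS : c ∈ cells lamS := (hmemS c).2 ⟨hc, h⟩
        have := hbij.mapsTo hcS
        simp only [Set.mem_Icc] at this ⊢
        omega
    · -- injOn
      intro c hc d hdd he
      by_cases h1 : c = c₀ <;> by_cases h2 : d = c₀
      · rw [h1, h2]
      · exfalso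
        subst h1
        rw [Function.update_self, Function.update_of_ne h2] at he
        have := (hbij.mapsTo ((hmemS d).2 ⟨hdd, h2⟩)).2
        omega
      · exfalso
        subst h2
        rw [Function.update_self, Function.update_of_ne h1] at he
        have := (hbij.mapsTo ((hmemS c).2 ⟨hc, h1⟩)).2
        omega
      · rw [Function.update_of_ne h1, Function.update_of_ne h2] at he
        exact hbij.injOn ((hmemS c).2 ⟨hc, h1⟩) ((hmemS d).2 ⟨hdd, h2⟩) he
    · -- surjOn
      intro v hv
      simp only [Set.mem_Icc] at hv
      by_cases h : v = lamB.sum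
      · exact ⟨c₀, hc₀, by simp [h]⟩
      · have hv' : v ∈ Set.Icc 1 lamS.sum := by simp only [Set.mem_Icc]; omega
        obtain ⟨c, hc, hcv⟩ := hbij.surjOn hv'
        refine ⟨c, hSsubB hc, ?_⟩
        rw [Function.update_of_ne ((hmemS c).1 hc).2]
        exact hcv
    · -- rows
      intro i j h1 h2
      by_cases hj2 : (i, j + 1) = c₀
      · have hne1 : (i, j) ≠ c₀ := by
          intro h; rw [← hj2] at h; simp at h
        rw [hj2, Function.update_self, Function.update_of_ne hne1]
        have hcS : (i, j) ∈ cells lamS := (hmemS _).2 ⟨h1, hne1⟩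
        have := (hbij.mapsTo hcS).2
        omega
      · have hne1 : (i, j) ≠ c₀ := by
          intro h
          apply hr
          have : (c₀.1, c₀.2 + 1) = (i, j + 1) := by rw [← h]
          rw [this]; exact h2
        rw [Function.update_of_ne hne1, Function.update_of_ne hj2]
        exact hrow i j ((hmemS _).2 ⟨h1, hne1⟩) ((hmemS _).2 ⟨h2, hj2⟩)
    · -- cols
      intro i j h1 h2
      by_cases hj2 : (i + 1, j) = c₀
      · have hne1 : (i, j) ≠ c₀ := by
          intro h; rw [← hj2] at h; simp at h
        rw [hj2, Function.update_self, Function.update_of_ne hne1]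
        have hcS : (i, j) ∈ cells lamS := (hmemS _).2 ⟨h1, hne1⟩
        have := (hbij.mapsTo hcS).2
        omega
      · have hne1 : (i, j) ≠ c₀ := by
          intro h
          apply hd
          have : (c₀.1 + 1, c₀.2) = (i + 1, j) := by rw [← h]
          rw [this]; exact h2
        rw [Function.update_of_ne hne1, Function.update_of_ne hj2]
        exact hcol i j ((hmemS _).2 ⟨h1, hne1⟩) ((hmemS _).2 ⟨h2, hj2⟩)
    · exact Function.update_self _ _ _
    · exact (hQ T' lamB.sum).2 hQT
    · rw [Function.update_idem, ← hT'c₀]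
      exact Function.update_eq_self _ _

lemma sum_pair (a b : ℕ) : ([a, b] : List ℕ).sum = a + b := by simp

lemma cells_eq_row1 {a b : ℕ} (hba : b ≤ a) :
    cells [a, b] = cells [a + 1, b] \ {(1, a + 1)} := by
  ext ⟨i, j⟩
  simp only [Set.mem_diff, mem_cells_pair, Set.mem_singleton_iff, Prod.mk.injEq]
  omega

lemma cells_eq_row2 (a b : ℕ) :
    cells [a, b] = cells [a, b + 1] \ {(2, b + 1)} := by
  ext ⟨i, j⟩
  simp only [Set.mem_diff, mem_cells_pair, Set.mem_singleton_iff, Prod.mk.injEq]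
  omega

lemma syt_partition {a b : ℕ} (h1 : 1 ≤ a + b) :
    {T | IsSYT [a, b] T} =
      {T | IsSYT [a, b] T ∧ T (1, a) = a + b} ∪ {T | IsSYT [a, b] T ∧ T (2, b) = a + b} := by
  ext T
  simp only [Set.mem_union, Set.mem_setOf_eq]
  constructor
  · intro hT
    obtain ⟨hz, hbij, hrow, hcol⟩ := hT
    have hm : a + b ∈ Set.Icc 1 ([a, b] : List ℕ).sum := by
      rw [sum_pair]; simp; omega
    obtain ⟨⟨i, j⟩, hc, hcv⟩ := hbij.surjOn hm
    rcases mem_cells_pair.1 hc with ⟨hi, hj1, hj2⟩ | ⟨hi, hj1, hj2⟩ <;> simp only at hi <;> subst hi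
    · have hj : j = a := by
        by_contra hne
        have hc' : ((1 : ℕ), j + 1) ∈ cells [a, b] := by
          rw [mem_cells_pair]; left; simp; omega
        have h2 := hrow 1 j hc hc'
        have h3 := (hbij.mapsTo hc').2
        rw [sum_pair] at h3
        omega
      subst hj; exact Or.inl ⟨⟨hz, hbij, hrow, hcol⟩, hcv⟩
    · have hj : j = b := by
        by_contra hne
        have hc' : ((2 : ℕ), j + 1) ∈ cells [a, b] := by
          rw [mem_cells_pair]; right; simp; omega
        have h2 := hrow 2 j hc hc'
        have h3 := (hbij.mapsTo hc').2
        rw [sum_pair] at h3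
        omega
      subst hj; exact Or.inr ⟨⟨hz, hbij, hrow, hcol⟩, hcv⟩
  · rintro (⟨h, _⟩ | ⟨h, _⟩) <;> exact h

lemma syt_disj {a b : ℕ} (hba : b ≤ a) (h1 : 1 ≤ a + b) :
    Disjoint {T | IsSYT [a, b] T ∧ T (1, a) = a + b} {T | IsSYT [a, b] T ∧ T (2, b) = a + b} := by
  rw [Set.disjoint_left]
  rintro T ⟨hT, h1v⟩ ⟨_, h2v⟩
  rcases Nat.eq_zero_or_pos b with hb | hb
  · subst hb
    have : ((2 : ℕ), (0 : ℕ)) ∉ cells [a, 0] := by rw [mem_cells_pair]; omega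
    have := hT.1 _ this
    omega
  · have hc1 : ((1 : ℕ), a) ∈ cells [a, b] := by rw [mem_cells_pair]; left; simp; omega
    have hc2 : ((2 : ℕ), b) ∈ cells [a, b] := by rw [mem_cells_pair]; right; simp; omega
    have := hT.2.1.injOn hc1 hc2 (h1v.trans h2v.symm)
    simp at this

lemma syt_zero : {T : ℕ × ℕ → ℕ | IsSYT [0, 0] T} = {fun _ => 0} := by
  have hcells : cells [(0 : ℕ), 0] = ∅ := by
    ext ⟨i, j⟩; rw [mem_cells_pair]; simp; omega
  ext T
  simp only [Set.mem_setOf_eq, Set.mem_singleton_iff]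
  constructor
  · intro hT
    funext c
    exact hT.1 c (by rw [hcells]; exact Set.notMem_empty c)
  · rintro rfl
    refine ⟨fun c _ => rfl, ?_, ?_, ?_⟩
    · rw [hcells, sum_pair]
      have he : Set.Icc 1 (0 + 0) = (∅ : Set ℕ) := by simp
      rw [he]
      exact Set.bijOn_empty _
    · intro i j h1 _; rw [hcells] at h1; exact absurd h1 (Set.notMem_empty _)
    · intro i j h1 _; rw [hcells] at h1; exact absurd h1 (Set.notMem_empty _)

lemma ncard_S1 {a b : ℕ} (hba : b ≤ a) :
    {T | IsSYT [a + 1, b] T ∧ T (1, a + 1) = (a + 1) + b}.ncard =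
      {T | IsSYT [a, b] T}.ncard := by
  have hc₀ : ((1 : ℕ), a + 1) ∈ cells [a + 1, b] := by
    rw [mem_cells_pair]; left; simp
  have hr : ((1 : ℕ), a + 1 + 1) ∉ cells [a + 1, b] := by
    rw [mem_cells_pair]; omega
  have hd : ((1 : ℕ) + 1, a + 1) ∉ cells [a + 1, b] := by
    rw [mem_cells_pair]; omega
  have himg := erase_image [a, b] [a + 1, b] (1, a + 1) (cells_eq_row1 hba) hc₀
    (by rw [sum_pair, sum_pair]; omega) hr hd (fun _ => True) (by simp)
  simp only [and_true] at himg
  have hsub : {T | IsSYT [a + 1, b] T ∧ T (1, a + 1) = ([a + 1, b] : List ℕ).sum} ⊆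
      {T : ℕ × ℕ → ℕ | T (1, a + 1) = ([a + 1, b] : List ℕ).sum} := fun T hT => hT.2
  have hinj := (erase_injOn (1, a + 1) (([a + 1, b] : List ℕ).sum)).mono hsub
  have := Set.ncard_image_of_injOn hinj
  rw [himg] at this
  rw [sum_pair] at this
  exact this.symm

lemma ncard_S2 {a b : ℕ} (hba : b + 1 ≤ a) :
    {T | IsSYT [a, b + 1] T ∧ T (2, b + 1) = a + (b + 1)}.ncard =
      {T | IsSYT [a, b] T}.ncard := by
  have hc₀ : ((2 : ℕ), b + 1) ∈ cells [a, b + 1] := by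
    rw [mem_cells_pair]; right; simp
  have hr : ((2 : ℕ), b + 1 + 1) ∉ cells [a, b + 1] := by
    rw [mem_cells_pair]; omega
  have hd : ((2 : ℕ) + 1, b + 1) ∉ cells [a, b + 1] := by
    rw [mem_cells_pair]; omega
  have himg := erase_image [a, b] [a, b + 1] (2, b + 1) (cells_eq_row2 a b) hc₀
    (by rw [sum_pair, sum_pair]; omega) hr hd (fun _ => True) (by simp)
  simp only [and_true] at himg
  have hsub : {T | IsSYT [a, b + 1] T ∧ T (2, b + 1) = ([a, b + 1] : List ℕ).sum} ⊆
      {T : ℕ × ℕ → ℕ | T (2, b + 1) = ([a, b + 1] : List ℕ).sum} := fun T hT => hT.2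
  have hinj := (erase_injOn (2, b + 1) (([a, b + 1] : List ℕ).sum)).mono hsub
  have := Set.ncard_image_of_injOn hinj
  rw [himg] at this
  rw [sum_pair] at this
  exact this.symm

lemma S1_empty_of_eq {a : ℕ} (ha : 1 ≤ a) :
    {T | IsSYT [a, a] T ∧ T (1, a) = a + a} = ∅ := by
  ext T
  simp only [Set.mem_setOf_eq, Set.mem_empty_iff_false, iff_false, not_and]
  intro hT hv
  have hc1 : ((1 : ℕ), a) ∈ cells [a, a] := by rw [mem_cells_pair]; left; simp; omega
  have hc2 : ((1 : ℕ) + 1, a) ∈ cells [a, a] := by rw [mem_cells_pair]; right; simp; omega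
  have h1 := hT.2.2.2 1 a hc1 hc2
  have h2 := (hT.2.1.mapsTo hc2).2
  rw [sum_pair] at h2
  omega

lemma syt_split {a b : ℕ} (hba : b ≤ a) (h1 : 1 ≤ a + b) :
    {T | IsSYT [a, b] T}.ncard =
      {T | IsSYT [a, b] T ∧ T (1, a) = a + b}.ncard +
      {T | IsSYT [a, b] T ∧ T (2, b) = a + b}.ncard := by
  have hfin : {T | IsSYT [a, b] T}.Finite := syt_finite _
  rw [syt_partition h1]
  exact Set.ncard_union_eq (syt_disj hba h1) (hfin.subset (fun T hT => hT.1))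
    (hfin.subset (fun T hT => hT.1))

lemma count_pair : ∀ s a b : ℕ, a + b = s → b ≤ a →
    ({T | IsSYT [a, b] T}.ncard : ℤ) = ((a + b).choose a : ℤ) - ((a + b).choose (a + 1) : ℤ) := by
  intro s
  induction s using Nat.strong_induction_on with
  | _ s IH =>
    intro a b hs hba
    rcases Nat.eq_zero_or_pos s with rfl | hpos
    · have ha : a = 0 := by omega
      have hb : b = 0 := by omega
      subst ha; subst hb
      rw [syt_zero, Set.ncard_singleton]
      simp
    · have ha : 1 ≤ a := by omega
      -- compute ncard S1
      have hS1 : ({T | IsSYT [a, b] T ∧ T (1, a) = a + b}.ncard : ℤ) =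
          if b < a then ((a - 1 + b).choose (a - 1) : ℤ) - ((a - 1 + b).choose a : ℤ) else 0 := by
        rcases Nat.lt_or_ge b a with hlt | hge
        · obtain ⟨a', rfl⟩ : ∃ a', a = a' + 1 := ⟨a - 1, by omega⟩
          have hba' : b ≤ a' := by omega
          rw [if_pos hlt, ncard_S1 hba']
          have := IH (a' + b) (by omega) a' b rfl hba'
          rw [this]
          congr 2 <;> omega
        · have heq : a = b := by omega
          subst heq
          rw [if_neg (by omega), S1_empty_of_eq ha]
          simp
      -- compute ncard S2
      have hS2 : ({T | IsSYT [a, b] T ∧ T (2, b) = a + b}.ncard : ℤ) =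
          if 1 ≤ b then ((a + (b - 1)).choose a : ℤ) - ((a + (b - 1)).choose (a + 1) : ℤ)
          else 0 := by
        clear hS1
        rcases Nat.eq_zero_or_pos b with rfl | hb
        · rw [if_neg (by omega)]
          have : {T | IsSYT [a, 0] T ∧ T (2, 0) = a + 0} = ∅ := by
            ext T
            simp only [Set.mem_setOf_eq, Set.mem_empty_iff_false, iff_false, not_and]
            intro hT hv
            have : ((2 : ℕ), (0 : ℕ)) ∉ cells [a, 0] := by rw [mem_cells_pair]; omega
            have := hT.1 _ this
            omega
          rw [this]
          simp
        · obtain ⟨b', rfl⟩ : ∃ b', b = b' + 1 := ⟨b - 1, by omega⟩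
          rw [if_pos (by omega), ncard_S2 hba]
          have := IH (a + b') (by omega) a b' rfl (by omega)
          rw [this]
          congr 2 <;> omega
      have hsplit := syt_split hba (le_trans ha (Nat.le_add_right a b))
      rw [hsplit]
      push_cast
      rw [hS1, hS2]
      clear hsplit hS1 hS2
      rcases Nat.lt_or_ge b a with hlt | hge
      · rw [if_pos hlt]
        rcases Nat.eq_zero_or_pos b with rfl | hb
        · rw [if_neg (by omega)]
          simp only [Nat.add_zero]
          rw [Nat.choose_self, Nat.choose_self,
            Nat.choose_eq_zero_of_lt (show a - 1 < a by omega),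
            Nat.choose_eq_zero_of_lt (show a < a + 1 by omega)]
          norm_num
        · rw [if_pos (show 1 ≤ b from hb)]
          obtain ⟨a', rfl⟩ : ∃ a', a = a' + 1 := ⟨a - 1, by omega⟩
          obtain ⟨b', rfl⟩ : ∃ b', b = b' + 1 := ⟨b - 1, by omega⟩
          have h1 : a' + 1 + (b' + 1) = (a' + (b' + 1)) + 1 := by omega
          have h2 : a' + 1 - 1 + (b' + 1) = a' + (b' + 1) := by omega
          have h3 : a' + 1 + (b' + 1 - 1) = a' + (b' + 1) := by omega
          rw [h1, h2, h3, Nat.choose_succ_succ' (a' + (b' + 1)) a',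
            Nat.choose_succ_succ' (a' + (b' + 1)) (a' + 1)]
          push_cast; ring
      · have heq : a = b := by omega
        subst heq
        rw [if_neg (by omega), if_pos (by omega)]
        obtain ⟨a', rfl⟩ : ∃ a', a = a' + 1 := ⟨a - 1, by omega⟩
        have h3 : a' + 1 + (a' + 1 - 1) = 2 * a' + 1 := by omega
        have h1 : a' + 1 + (a' + 1) = (2 * a' + 1) + 1 := by omega
        rw [h3, h1, Nat.choose_succ_succ' (2 * a' + 1) a',
          Nat.choose_succ_succ' (2 * a' + 1) (a' + 1)]
        have hsymm : (2 * a' + 1).choose a' = (2 * a' + 1).choose (a' + 1) := by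
          rw [← Nat.choose_symm (show a' + 1 ≤ 2 * a' + 1 by omega)]
          congr 1
          omega
        rw [hsymm]
        push_cast; ring

lemma row_lt {a b : ℕ} {T : ℕ × ℕ → ℕ} (hT : IsSYT [a, b] T) :
    ∀ i j j', (i, j) ∈ cells [a, b] → (i, j') ∈ cells [a, b] → j < j' → T (i, j) < T (i, j') := by
  intro i j j'
  induction j' with
  | zero => intro _ _ h; omega
  | succ k ihk =>
    intro h1 h2 hjj
    rcases Nat.lt_or_ge j k with h | h
    · have hk : (i, k) ∈ cells [a, b] := by
        rcases mem_cells_pair.1 h2 with ⟨hi, hj1, hj2⟩ | ⟨hi, hj1, hj2⟩ <;>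
          rw [mem_cells_pair] <;> simp only at hi ⊢
        · left; omega
        · right; omega
      exact lt_trans (ihk h1 hk h) (hT.2.2.1 i k hk h2)
    · have : j = k := by omega
      subst this
      exact hT.2.2.1 i j h1 h2

lemma row_le {a b : ℕ} {T : ℕ × ℕ → ℕ} (hT : IsSYT [a, b] T) {i j j' : ℕ}
    (h1 : (i, j) ∈ cells [a, b]) (h2 : (i, j') ∈ cells [a, b]) (hjj : j ≤ j') :
    T (i, j) ≤ T (i, j') := by
  rcases Nat.eq_or_lt_of_le hjj with rfl | h
  · exact le_refl _
  · exact le_of_lt (row_lt hT i j j' h1 h2 h)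

lemma top3_of_lt {m : ℕ} {T : ℕ × ℕ → ℕ} (hT : IsSYT [m + 3, m + 3] T)
    (hlt : T (1, m + 3) < T (2, m + 1)) :
    T (2, m + 3) = (m + 3) + (m + 3) ∧ T (2, m + 2) = (m + 3) + (m + 2) ∧
      T (2, m + 1) = (m + 3) + (m + 1) := by
  obtain ⟨hz, hbij, hrow, hcol⟩ := hT
  have hs : ([m + 3, m + 3] : List ℕ).sum = (m + 3) + (m + 3) := sum_pair _ _
  have hc1t : ((1 : ℕ), m + 3) ∈ cells [m + 3, m + 3] := by rw [mem_cells_pair]; left; simp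
  have hc21 : ((2 : ℕ), m + 1) ∈ cells [m + 3, m + 3] := by rw [mem_cells_pair]; right; simp
  have hc22 : ((2 : ℕ), m + 2) ∈ cells [m + 3, m + 3] := by rw [mem_cells_pair]; right; simp
  have hc23 : ((2 : ℕ), m + 3) ∈ cells [m + 3, m + 3] := by rw [mem_cells_pair]; right; simp
  have hTsyt : IsSYT [m + 3, m + 3] T := ⟨hz, hbij, hrow, hcol⟩
  -- generic bound for row-1 cells
  have hb1 : ∀ j, ((1 : ℕ), j) ∈ cells [m + 3, m + 3] → T (1, j) < T (2, m + 1) := by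
    intro j hj
    have hjle : j ≤ m + 3 := by
      rcases mem_cells_pair.1 hj with ⟨_, _, h⟩ | ⟨h, _, _⟩ <;> simp_all
    exact lt_of_le_of_lt (row_le hTsyt hj hc1t hjle) hlt
  -- value (m+3)+(m+3)
  have h3 : T (2, m + 3) = (m + 3) + (m + 3) := by
    have hmem : (m + 3) + (m + 3) ∈ Set.Icc 1 (([m + 3, m + 3] : List ℕ).sum) := by
      rw [hs]; simp only [Set.mem_Icc]; omega
    obtain ⟨⟨i, j⟩, hc, hcv⟩ := hbij.surjOn hmem
    have hub := (hbij.mapsTo hc23).2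
    rw [hs] at hub
    have hle : T (i, j) ≤ T (2, m + 3) := by
      rcases mem_cells_pair.1 hc with ⟨hi, hj1, hj2⟩ | ⟨hi, hj1, hj2⟩ <;>
        simp only at hi hj1 hj2 <;> subst hi
      · exact le_of_lt (lt_of_lt_of_le (hb1 j hc) (row_le hTsyt hc21 hc23 (by omega)))
      · exact row_le hTsyt hc hc23 hj2
    omega
  -- value (m+3)+(m+2)
  have h2 : T (2, m + 2) = (m + 3) + (m + 2) := by
    have hmem : (m + 3) + (m + 2) ∈ Set.Icc 1 (([m + 3, m + 3] : List ℕ).sum) := by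
      rw [hs]; simp only [Set.mem_Icc]; omega
    obtain ⟨⟨i, j⟩, hc, hcv⟩ := hbij.surjOn hmem
    have hub : T (2, m + 2) < T (2, m + 3) :=
      row_lt hTsyt 2 (m + 2) (m + 3) hc22 hc23 (by omega)
    have hle : T (2, m + 2) ≥ (m + 3) + (m + 2) := by
      rcases mem_cells_pair.1 hc with ⟨hi, hj1, hj2⟩ | ⟨hi, hj1, hj2⟩ <;>
        simp only at hi hj1 hj2 <;> subst hi
      · have := lt_of_lt_of_le (hb1 j hc) (row_le hTsyt hc21 hc22 (by omega))
        omega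
      · rcases Nat.lt_or_ge j (m + 3) with hj | hj
        · have := row_le hTsyt hc hc22 (by omega : j ≤ m + 2)
          omega
        · have : j = m + 3 := by omega
          subst this
          omega
    omega
  -- value (m+3)+(m+1)
  have h1 : T (2, m + 1) = (m + 3) + (m + 1) := by
    have hmem : (m + 3) + (m + 1) ∈ Set.Icc 1 (([m + 3, m + 3] : List ℕ).sum) := by
      rw [hs]; simp only [Set.mem_Icc]; omega
    obtain ⟨⟨i, j⟩, hc, hcv⟩ := hbij.surjOn hmem
    have hub : T (2, m + 1) < T (2, m + 2) :=
      row_lt hTsyt 2 (m + 1) (m + 2) hc21 hc22 (by omega)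
    have hle : T (2, m + 1) ≥ (m + 3) + (m + 1) := by
      rcases mem_cells_pair.1 hc with ⟨hi, hj1, hj2⟩ | ⟨hi, hj1, hj2⟩ <;>
        simp only at hi hj1 hj2 <;> subst hi
      · have := hb1 j hc
        omega
      · rcases Nat.lt_or_ge j (m + 2) with hj | hj
        · have := row_le hTsyt hc hc21 (by omega : j ≤ m + 1)
          omega
        · rcases Nat.eq_or_lt_of_le hj with hj' | hj'
          · have : j = m + 2 := by omega
            subst this
            omega
          · have : j = m + 3 := by omega
            subst this
            omega
    omega
  exact ⟨h3, h2, h1⟩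

lemma lt_of_top3 {m : ℕ} {T : ℕ × ℕ → ℕ} (hT : IsSYT [m + 3, m + 3] T)
    (h1 : T (2, m + 1) = (m + 3) + (m + 1)) :
    T (1, m + 3) < T (2, m + 1) := by
  obtain ⟨hz, hbij, hrow, hcol⟩ := hT
  have hc1t : ((1 : ℕ), m + 3) ∈ cells [m + 3, m + 3] := by rw [mem_cells_pair]; left; simp
  have hc21 : ((2 : ℕ), m + 1) ∈ cells [m + 3, m + 3] := by rw [mem_cells_pair]; right; simp
  have hc22 : ((2 : ℕ), m + 2) ∈ cells [m + 3, m + 3] := by rw [mem_cells_pair]; right; simp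
  have hc23 : ((2 : ℕ), m + 3) ∈ cells [m + 3, m + 3] := by rw [mem_cells_pair]; right; simp
  have hT' : IsSYT [m + 3, m + 3] T := ⟨hz, hbij, hrow, hcol⟩
  have hub := (hbij.mapsTo hc1t).2
  rw [sum_pair] at hub
  have hne1 : T (1, m + 3) ≠ T (2, m + 1) := by
    intro h
    have := hbij.injOn hc1t hc21 h
    simp at this
  have hne2 : T (1, m + 3) ≠ T (2, m + 2) := by
    intro h
    have := hbij.injOn hc1t hc22 h
    simp at this
  have hne3 : T (1, m + 3) ≠ T (2, m + 3) := by
    intro h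
    have := hbij.injOn hc1t hc23 h
    simp at this
  have hv2 : T (2, m + 1) < T (2, m + 2) := row_lt hT' 2 (m + 1) (m + 2) hc21 hc22 (by omega)
  have hv3 : T (2, m + 2) < T (2, m + 3) := row_lt hT' 2 (m + 2) (m + 3) hc22 hc23 (by omega)
  have hub3 := (hbij.mapsTo hc23).2
  rw [sum_pair] at hub3
  omega

lemma syt_nonempty (n : ℕ) : {T | IsSYT [n, n] T}.Nonempty := by
  refine ⟨fun c => if c.1 = 1 ∧ 1 ≤ c.2 ∧ c.2 ≤ n then c.2
    else if c.1 = 2 ∧ 1 ≤ c.2 ∧ c.2 ≤ n then n + c.2 else 0, ?_, ?_, ?_, ?_⟩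
  · intro ⟨i, j⟩ hc
    rw [mem_cells_pair] at hc
    simp only at hc ⊢
    split_ifs with h1 h2
    · exact absurd (Or.inl h1) hc
    · exact absurd (Or.inr h2) hc
    · rfl
  · refine ⟨?_, ?_, ?_⟩
    · intro ⟨i, j⟩ hc
      rw [mem_cells_pair] at hc
      rw [sum_pair]
      simp only [Set.mem_Icc]
      simp only at hc ⊢
      split_ifs with h1 h2 <;> omega
    · intro ⟨i, j⟩ hc ⟨i', j'⟩ hc' he
      rw [mem_cells_pair] at hc hc'
      simp only at hc hc' he
      simp only [Prod.mk.injEq]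
      split_ifs at he with h1 h2 h3 h4 h5 h6 <;> omega
    · intro v hv
      rw [sum_pair] at hv
      simp only [Set.mem_Icc] at hv
      rcases le_or_gt v n with h | h
      · refine ⟨(1, v), ?_, ?_⟩
        · rw [mem_cells_pair]; left; simp; omega
        · simp only
          split_ifs with h1 h2 <;> simp_all <;> omega
      · refine ⟨(2, v - n), ?_, ?_⟩
        · rw [mem_cells_pair]; right; simp; omega
        · simp only
          split_ifs with h1 h2 <;> simp_all <;> omega
  · intro i j hc hc'
    rw [mem_cells_pair] at hc hc'
    simp only at hc hc' ⊢
    split_ifs with h1 h2 h3 h4 h5 h6 <;> omega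
  · intro i j hc hc'
    rw [mem_cells_pair] at hc hc'
    simp only at hc hc' ⊢
    split_ifs with h1 h2 h3 h4 h5 h6 <;> omega

lemma ne_pair_snd {x y : ℕ} (h : x ≠ y) : ((2 : ℕ), x) ≠ ((2 : ℕ), y) := by
  intro hh; rw [Prod.mk.injEq] at hh; exact h hh.2

lemma event_ncard (m : ℕ) :
    {T | IsSYT [m + 3, m + 3] T ∧ T (1, m + 3) < T (2, m + 1)}.ncard =
    {T | IsSYT [m + 3, m] T}.ncard := by
  have hev : {T | IsSYT [m + 3, m + 3] T ∧ T (1, m + 3) < T (2, m + 1)} =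
      {T | IsSYT [m + 3, m + 3] T ∧ T (2, m + 3) = m + 3 + (m + 3) ∧
        (T (2, m + 2) = m + 3 + (m + 2) ∧ T (2, m + 1) = m + 3 + (m + 1))} := by
    ext T
    simp only [Set.mem_setOf_eq]
    constructor
    · rintro ⟨hT, hlt⟩
      obtain ⟨h3, h2, h1⟩ := top3_of_lt hT hlt
      exact ⟨hT, h3, h2, h1⟩
    · rintro ⟨hT, _, _, h1⟩
      exact ⟨hT, lt_of_top3 hT h1⟩
  rw [hev]
  -- step 1 : remove (2, m+3)
  have himg1 := erase_image [m + 3, m + 2] [m + 3, m + 3] (2, m + 3)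
    (by ext ⟨i, j⟩;
        simp only [Set.mem_diff, mem_cells_pair, Set.mem_singleton_iff, Prod.mk.injEq]; omega)
    (by rw [mem_cells_pair]; right; simp)
    (by rw [sum_pair, sum_pair]; omega)
    (by rw [mem_cells_pair]; omega)
    (by rw [mem_cells_pair]; omega)
    (fun T => T (2, m + 2) = m + 3 + (m + 2) ∧ T (2, m + 1) = m + 3 + (m + 1))
    (by
      intro T v
      beta_reduce
      rw [Function.update_of_ne (ne_pair_snd (by omega)),
        Function.update_of_ne (ne_pair_snd (by omega))])
  simp only [sum_pair] at himg1
  have hsub1 : {T | IsSYT [m + 3, m + 3] T ∧ T (2, m + 3) = m + 3 + (m + 3) ∧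
        (T (2, m + 2) = m + 3 + (m + 2) ∧ T (2, m + 1) = m + 3 + (m + 1))} ⊆
        {T : ℕ × ℕ → ℕ | T (2, m + 3) = m + 3 + (m + 3)} := fun T hT => hT.2.1
  have e1 := Set.ncard_image_of_injOn
    ((erase_injOn (2, m + 3) (m + 3 + (m + 3))).mono hsub1)
  rw [himg1] at e1
  rw [← e1]
  clear e1 himg1 hsub1 hev
  -- step 2 : remove (2, m+2)
  have himg2 := erase_image [m + 3, m + 1] [m + 3, m + 2] (2, m + 2)
    (by ext ⟨i, j⟩;
        simp only [Set.mem_diff, mem_cells_pair, Set.mem_singleton_iff, Prod.mk.injEq]; omega)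
    (by rw [mem_cells_pair]; right; simp)
    (by rw [sum_pair, sum_pair]; omega)
    (by rw [mem_cells_pair]; omega)
    (by rw [mem_cells_pair]; omega)
    (fun T => T (2, m + 1) = m + 3 + (m + 1))
    (by
      intro T v
      beta_reduce
      rw [Function.update_of_ne (ne_pair_snd (by omega))])
  simp only [sum_pair] at himg2
  have hsub2 : {T | IsSYT [m + 3, m + 2] T ∧ T (2, m + 2) = m + 3 + (m + 2) ∧
        T (2, m + 1) = m + 3 + (m + 1)} ⊆
        {T : ℕ × ℕ → ℕ | T (2, m + 2) = m + 3 + (m + 2)} := fun T hT => hT.2.1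
  have e2 := Set.ncard_image_of_injOn
    ((erase_injOn (2, m + 2) (m + 3 + (m + 2))).mono hsub2)
  rw [himg2] at e2
  rw [← e2]
  clear e2 himg2 hsub2
  -- step 3 : remove (2, m+1)
  have himg3 := erase_image [m + 3, m] [m + 3, m + 1] (2, m + 1)
    (by ext ⟨i, j⟩;
        simp only [Set.mem_diff, mem_cells_pair, Set.mem_singleton_iff, Prod.mk.injEq]; omega)
    (by rw [mem_cells_pair]; right; simp)
    (by rw [sum_pair, sum_pair]; omega)
    (by rw [mem_cells_pair]; omega)
    (by rw [mem_cells_pair]; omega)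
    (fun _ => True) (by simp)
  simp only [sum_pair, and_true] at himg3
  have hsub3 : {T | IsSYT [m + 3, m + 1] T ∧ T (2, m + 1) = m + 3 + (m + 1)} ⊆
        {T : ℕ × ℕ → ℕ | T (2, m + 1) = m + 3 + (m + 1)} := fun T hT => hT.2
  have e3 := Set.ncard_image_of_injOn
    ((erase_injOn (2, m + 1) (m + 3 + (m + 1))).mono hsub3)
  rw [himg3] at e3
  rw [← e3]

lemma key_identity (m : ℕ) :
    (2 * (m : ℝ) + 5) * (((2 * m + 3).choose (m + 3) : ℝ) - ((2 * m + 3).choose (m + 4) : ℝ)) =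
    ((m : ℝ) + 1) * (((2 * m + 6).choose (m + 3) : ℝ) - ((2 * m + 6).choose (m + 4) : ℝ)) := by
  have F1 : (2 * m + 3).choose (m + 4) * (m + 4) = (2 * m + 3).choose (m + 3) * m := by
    have h := Nat.choose_succ_right_eq (2 * m + 3) (m + 3)
    rw [show 2 * m + 3 - (m + 3) = m from by omega] at h
    rw [show m + 3 + 1 = m + 4 from rfl] at h
    exact h
  have H2 : (2 * m + 3).choose (m + 1) * (m + 1) = (2 * m + 3).choose m * (m + 3) := by
    have h := Nat.choose_succ_right_eq (2 * m + 3) m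
    rw [show 2 * m + 3 - m = m + 3 from by omega] at h
    exact h
  have H1 : (2 * m + 3).choose m = (2 * m + 3).choose (m + 3) := by
    have h := Nat.choose_symm (show m + 3 ≤ 2 * m + 3 from by omega)
    rw [show 2 * m + 3 - (m + 3) = m from by omega] at h
    exact h
  have V1 : (2 * m + 4) * (2 * m + 3).choose m = (2 * m + 4).choose (m + 1) * (m + 1) := by
    have h := Nat.add_one_mul_choose_eq (2 * m + 3) m
    rw [show 2 * m + 3 + 1 = 2 * m + 4 from by omega] at h
    exact h
  have V2 : (2 * m + 5) * (2 * m + 4).choose (m + 1) = (2 * m + 5).choose (m + 2) * (m + 2) := by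
    have h := Nat.add_one_mul_choose_eq (2 * m + 4) (m + 1)
    rw [show 2 * m + 4 + 1 = 2 * m + 5 from by omega,
      show m + 1 + 1 = m + 2 from by omega] at h
    exact h
  have V3 : (2 * m + 6) * (2 * m + 5).choose (m + 2) = (2 * m + 6).choose (m + 3) * (m + 3) := by
    have h := Nat.add_one_mul_choose_eq (2 * m + 5) (m + 2)
    rw [show 2 * m + 5 + 1 = 2 * m + 6 from by omega,
      show m + 2 + 1 = m + 3 from by omega] at h
    exact h
  have V4 : (2 * m + 4) * (2 * m + 3).choose (m + 1) = (2 * m + 4).choose (m + 2) * (m + 2) := by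
    have h := Nat.add_one_mul_choose_eq (2 * m + 3) (m + 1)
    rw [show 2 * m + 3 + 1 = 2 * m + 4 from by omega,
      show m + 1 + 1 = m + 2 from by omega] at h
    exact h
  have V5 : (2 * m + 5) * (2 * m + 4).choose (m + 2) = (2 * m + 5).choose (m + 3) * (m + 3) := by
    have h := Nat.add_one_mul_choose_eq (2 * m + 4) (m + 2)
    rw [show 2 * m + 4 + 1 = 2 * m + 5 from by omega,
      show m + 2 + 1 = m + 3 from by omega] at h
    exact h
  have V6 : (2 * m + 6) * (2 * m + 5).choose (m + 3) = (2 * m + 6).choose (m + 4) * (m + 4) := by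
    have h := Nat.add_one_mul_choose_eq (2 * m + 5) (m + 3)
    rw [show 2 * m + 5 + 1 = 2 * m + 6 from by omega,
      show m + 3 + 1 = m + 4 from by omega] at h
    exact h
  have F1' : ((2 * m + 3).choose (m + 4) : ℝ) * ((m : ℝ) + 4) =
      ((2 * m + 3).choose (m + 3) : ℝ) * m := by exact_mod_cast congrArg (Nat.cast : ℕ → ℝ) F1
  have H2' : ((2 * m + 3).choose (m + 1) : ℝ) * ((m : ℝ) + 1) =
      ((2 * m + 3).choose m : ℝ) * ((m : ℝ) + 3) := by exact_mod_cast congrArg (Nat.cast : ℕ → ℝ) H2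
  have H1' : ((2 * m + 3).choose m : ℝ) = ((2 * m + 3).choose (m + 3) : ℝ) := by
    exact_mod_cast congrArg (Nat.cast : ℕ → ℝ) H1
  have V1' : (2 * (m : ℝ) + 4) * ((2 * m + 3).choose m : ℝ) =
      ((2 * m + 4).choose (m + 1) : ℝ) * ((m : ℝ) + 1) := by
    exact_mod_cast congrArg (Nat.cast : ℕ → ℝ) V1
  have V2' : (2 * (m : ℝ) + 5) * ((2 * m + 4).choose (m + 1) : ℝ) =
      ((2 * m + 5).choose (m + 2) : ℝ) * ((m : ℝ) + 2) := by
    exact_mod_cast congrArg (Nat.cast : ℕ → ℝ) V2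
  have V3' : (2 * (m : ℝ) + 6) * ((2 * m + 5).choose (m + 2) : ℝ) =
      ((2 * m + 6).choose (m + 3) : ℝ) * ((m : ℝ) + 3) := by
    exact_mod_cast congrArg (Nat.cast : ℕ → ℝ) V3
  have V4' : (2 * (m : ℝ) + 4) * ((2 * m + 3).choose (m + 1) : ℝ) =
      ((2 * m + 4).choose (m + 2) : ℝ) * ((m : ℝ) + 2) := by
    exact_mod_cast congrArg (Nat.cast : ℕ → ℝ) V4
  have V5' : (2 * (m : ℝ) + 5) * ((2 * m + 4).choose (m + 2) : ℝ) =
      ((2 * m + 5).choose (m + 3) : ℝ) * ((m : ℝ) + 3) := by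
    exact_mod_cast congrArg (Nat.cast : ℕ → ℝ) V5
  have V6' : (2 * (m : ℝ) + 6) * ((2 * m + 5).choose (m + 3) : ℝ) =
      ((2 * m + 6).choose (m + 4) : ℝ) * ((m : ℝ) + 4) := by
    exact_mod_cast congrArg (Nat.cast : ℕ → ℝ) V6
  set M : ℝ := (m : ℝ)
  have hD : ((M + 1) * (M + 2) * (M + 3) * (M + 4)) ≠ 0 := by positivity
  apply mul_right_cancel₀ hD
  linear_combination (-(2*M+5)*(M+1)*(M+2)*(M+3)) * F1'
    + ((M+1)^2*(M+2)*(M+4)) * V3' + ((2*M+6)*(M+1)^2*(M+4)) * V2'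
    + ((2*M+5)*(2*M+6)*(M+1)*(M+4)) * V1'
    + (-(M+1)^2*(M+2)*(M+3)) * V6' + (-(2*M+6)*(M+1)^2*(M+2)) * V5'
    + (-(2*M+6)*(2*M+5)*(M+1)^2) * V4'
    + ((M+1)*(2*M+6)*(2*M+5)*(2*M+4)) * H2'
    + (-(M+1)*(2*M+4)*(2*M+5)*(2*M+6)) * H1'

/-- There is a constant `C > 0` such that for all `n ≥ 3` the minimal sorting probability
over all pairs of incomparable cells of the shape `(n,n)` is at most `C/n`; in fact it is
at most `3/(2n−1)`. Hence the minimal sorting probability of the Catalan poset is `O(1/n)`. -/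
theorem minimal_sortingProb_catalan_O_inv_n :
    ∃ C : ℝ, 0 < C ∧ ∀ n : ℕ, 3 ≤ n →
      sInf (sortingProbSet [n, n]) ≤ C / (n : ℝ) ∧
      sInf (sortingProbSet [n, n]) ≤ 3 / (2 * (n : ℝ) - 1) := by
  refine ⟨2, by norm_num, ?_⟩
  intro n hn
  obtain ⟨m, rfl⟩ : ∃ m, n = m + 3 := ⟨n - 3, by omega⟩
  have hfin : {T | IsSYT [m + 3, m + 3] T}.Finite := syt_finite _
  have hc1m : ((1 : ℕ), m + 3) ∈ cells [m + 3, m + 3] := by rw [mem_cells_pair]; left; simp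
  have hc2m : ((2 : ℕ), m + 1) ∈ cells [m + 3, m + 3] := by rw [mem_cells_pair]; right; simp
  -- numeric values
  have hN1 : ({T | IsSYT [m + 3, m + 3] T ∧ T (1, m + 3) < T (2, m + 1)}.ncard : ℤ) =
      ((2 * m + 3).choose (m + 3) : ℤ) - ((2 * m + 3).choose (m + 4) : ℤ) := by
    rw [event_ncard m]
    have h := count_pair (2 * m + 3) (m + 3) m (by ring) (Nat.le_add_right m 3)
    rw [show m + 3 + m = 2 * m + 3 from by ring, show m + 3 + 1 = m + 4 from rfl] at h
    exact h
  have hN0 : ((sytCount [m + 3, m + 3] : ℕ) : ℤ) =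
      ((2 * m + 6).choose (m + 3) : ℤ) - ((2 * m + 6).choose (m + 4) : ℤ) := by
    rw [sytCount]
    have h := count_pair (2 * m + 6) (m + 3) (m + 3) (by ring) (le_refl (m + 3))
    rw [show m + 3 + (m + 3) = 2 * m + 6 from by ring, show m + 3 + 1 = m + 4 from rfl] at h
    exact h
  -- partition of all SYT by the comparison
  have hunion : {T | IsSYT [m + 3, m + 3] T} =
      {T | IsSYT [m + 3, m + 3] T ∧ T (1, m + 3) < T (2, m + 1)} ∪
      {T | IsSYT [m + 3, m + 3] T ∧ T (2, m + 1) < T (1, m + 3)} := by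
    ext T
    simp only [Set.mem_union, Set.mem_setOf_eq]
    constructor
    · intro hT
      have hne : T (1, m + 3) ≠ T (2, m + 1) := by
        intro h
        have := hT.2.1.injOn hc1m hc2m h
        simp at this
      rcases lt_or_gt_of_ne hne with h | h
      · exact Or.inl ⟨hT, h⟩
      · exact Or.inr ⟨hT, h⟩
    · rintro (⟨h, _⟩ | ⟨h, _⟩) <;> exact h
  have hdisj : Disjoint {T | IsSYT [m + 3, m + 3] T ∧ T (1, m + 3) < T (2, m + 1)}
      {T | IsSYT [m + 3, m + 3] T ∧ T (2, m + 1) < T (1, m + 3)} := by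
    rw [Set.disjoint_left]
    rintro T ⟨_, h1⟩ ⟨_, h2⟩
    exact absurd h2 (lt_asymm h1)
  have hcard : sytCount [m + 3, m + 3] =
      {T | IsSYT [m + 3, m + 3] T ∧ T (1, m + 3) < T (2, m + 1)}.ncard +
      {T | IsSYT [m + 3, m + 3] T ∧ T (2, m + 1) < T (1, m + 3)}.ncard := by
    rw [sytCount, hunion]
    exact Set.ncard_union_eq hdisj (hfin.subset (fun T hT => hT.1))
      (hfin.subset (fun T hT => hT.1))
  have hN0pos : 0 < sytCount [m + 3, m + 3] := by
    rw [sytCount, Set.ncard_pos hfin]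
    exact syt_nonempty _
  set K0 : ℝ := (sytCount [m + 3, m + 3] : ℝ) with hK0
  set K1 : ℝ := ({T | IsSYT [m + 3, m + 3] T ∧ T (1, m + 3) < T (2, m + 1)}.ncard : ℝ) with hK1
  set K2 : ℝ := ({T | IsSYT [m + 3, m + 3] T ∧ T (2, m + 1) < T (1, m + 3)}.ncard : ℝ) with hK2
  have hK0pos : 0 < K0 := by
    rw [hK0]; exact_mod_cast hN0pos
  have hK0ne : K0 ≠ 0 := ne_of_gt hK0pos
  have hsum : K0 = K1 + K2 := by
    rw [hK0, hK1, hK2]; exact_mod_cast hcard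
  have hkey : (2 * (m : ℝ) + 5) * K1 = ((m : ℝ) + 1) * K0 := by
    have h1 : K1 = ((2 * m + 3).choose (m + 3) : ℝ) - ((2 * m + 3).choose (m + 4) : ℝ) := by
      rw [hK1]
      exact_mod_cast congrArg (Int.cast : ℤ → ℝ) hN1
    have h0 : K0 = ((2 * m + 6).choose (m + 3) : ℝ) - ((2 * m + 6).choose (m + 4) : ℝ) := by
      rw [hK0]
      exact_mod_cast congrArg (Int.cast : ℤ → ℝ) hN0
    rw [h1, h0]
    exact key_identity m
  -- the sorting probability of this pair
  have hSP : SP [m + 3, m + 3] (1, m + 3) (2, m + 1) = 3 / (2 * (m : ℝ) + 5) := by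
    rw [SP, sytProb, sytProb]
    rw [div_sub_div_same]
    rw [div_eq_div_iff hK0ne (by positivity : (2 : ℝ) * (m : ℝ) + 5 ≠ 0)]
    have hK2' : K2 = K0 - K1 := by linarith
    linear_combination (2 * (m : ℝ) + 5) * hK2' - 2 * hkey
  have habs : |SP [m + 3, m + 3] (1, m + 3) (2, m + 1)| = 3 / (2 * (m : ℝ) + 5) := by
    rw [hSP, abs_of_pos (by positivity)]
  have hmem : 3 / (2 * (m : ℝ) + 5) ∈ sortingProbSet [m + 3, m + 3] := by
    refine ⟨(1, m + 3), (2, m + 1), hc1m, hc2m, ?_, habs.symm⟩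
    push_cast
    ring_nf
    norm_num
  have hbdd : BddBelow (sortingProbSet [m + 3, m + 3]) := by
    refine ⟨0, fun x hx => ?_⟩
    obtain ⟨d1, d2, _, _, _, rfl⟩ := hx
    positivity
  have hle := csInf_le hbdd hmem
  have hm0 : (0 : ℝ) ≤ (m : ℝ) := Nat.cast_nonneg m
  constructor
  · refine le_trans hle ?_
    have h2 : (3 : ℝ) / (2 * (m : ℝ) + 5) ≤ 2 / ((m : ℝ) + 3) := by
      rw [div_le_div_iff₀ (by positivity) (by positivity)]
      nlinarith
    refine le_trans h2 (le_of_eq ?_)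
    push_cast
    ring
  · refine le_trans hle (le_of_eq ?_)
    push_cast
    rw [show 2 * ((m : ℝ) + 3) - 1 = 2 * (m : ℝ) + 5 from by ring]
end

section
/- Let λ = (λ₁ ≥ … ≥ λ_k ≥ 0) and ν = (ν₁ ≥ … ≥ ν_k ≥ 0) be partitions with at most k parts (padded with zeros) such that ν_i ≤ λ_i for all i, and let f^{λ/ν} denote the number of standard Young tableaux of the skew shape λ/ν. Then f^{λ/ν} = Σ_{σ ∈ S_k} sgn(σ) · (|λ| − |ν|)! / ∏_{i=1}^{k} (λ_i − ν_{σ(i)} + σ(i) − i)!, where |λ| = λ₁+…+λ_k, |ν| = ν₁+…+ν_k, and any summand containing a factorial of a negative integer is interpreted as 0. -/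
open Filter Topology

/-- The cells of the skew Young diagram `λ/ν` (1-indexed): `(i,j)` with
`1 ≤ i ≤ k` and `ν_i < j ≤ λ_i`. -/
def skewCells (lam nu : List ℕ) : Set (ℕ × ℕ) :=
  {c | 1 ≤ c.1 ∧ c.1 ≤ lam.length ∧ rowLen nu c.1 < c.2 ∧ c.2 ≤ rowLen lam c.1}

/-- `T` is a standard Young tableau of skew shape `λ/ν`: it fills the cells of `λ/ν`
bijectively with `1,…,|λ|−|ν|`, is `0` outside, and increases along rows and down
columns. -/
def IsSkewSYT (lam nu : List ℕ) (T : ℕ × ℕ → ℕ) : Prop :=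
  (∀ c, c ∉ skewCells lam nu → T c = 0) ∧
  Set.BijOn T (skewCells lam nu) (Set.Icc 1 (lam.sum - nu.sum)) ∧
  (∀ i j, (i, j) ∈ skewCells lam nu → (i, j + 1) ∈ skewCells lam nu → T (i, j) < T (i, j + 1)) ∧
  (∀ i j, (i, j) ∈ skewCells lam nu → (i + 1, j) ∈ skewCells lam nu → T (i, j) < T (i + 1, j))

/-- The number `f^{λ/ν}` of standard Young tableaux of skew shape `λ/ν`. -/
noncomputable def skewCount (lam nu : List ℕ) : ℕ := {T | IsSkewSYT lam nu T}.ncard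

/-!
Removing the cell that holds the largest entry `N = |λ| - |ν|` of a standard filling of `λ/ν`
leaves a standard filling of `(λ - e_r)/ν`, where that cell ends a row `r` at a corner of `λ/ν`;
hence `f^{λ/ν} = ∑_r f^{(λ - e_r)/ν}` over the corner rows `r`.

The right-hand side is `N! · det A(λ, ν)` with `A(λ, ν)_{ij} = 1 / (λ_j - ν_i + i - j)!`. Since
`1/(a - 1)! = a/a!`, every Leibniz term satisfies `∑_r ∏ 1/(a - e_r)! = (∑ a) ∏ 1/a!`, whence
`∑_r det A(λ - e_r, ν) = N · det A(λ, ν)`. The terms of non-corner rows vanish (two equal columns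
when `λ_{r+1} = λ_r`, a zero block when `λ_r = ν_r`) and `A(ν, ν)` is unitriangular, so both sides
obey the same recursion in `N`.
-/

open Nat Function Equiv

def invFactorial (x : ℤ) : ℚ := if 0 ≤ x then (x.toNat ! : ℚ)⁻¹ else 0

theorem invFactorial_of_neg {x : ℤ} (hx : x < 0) : invFactorial x = 0 :=
  if_neg hx.not_ge

theorem invFactorial_of_nonneg {x : ℤ} (hx : 0 ≤ x) : invFactorial x = (x.toNat ! : ℚ)⁻¹ :=
  if_pos hx

theorem invFactorial_zero : invFactorial 0 = 1 := by
  simp [invFactorial]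

theorem invFactorial_natCast (m : ℕ) : invFactorial m = (m ! : ℚ)⁻¹ := by
  simp [invFactorial]

theorem invFactorial_sub_one (a : ℤ) : invFactorial (a - 1) = a * invFactorial a := by
  rcases le_or_gt a 0 with ha | ha
  · rw [invFactorial_of_neg (by omega)]
    rcases ha.lt_or_eq with ha | rfl
    · rw [invFactorial_of_neg ha, mul_zero]
    · rw [Int.cast_zero, zero_mul]
  · obtain ⟨m, rfl⟩ : ∃ m : ℕ, a = (m + 1 : ℕ) := ⟨(a - 1).toNat, by omega⟩
    rw [show ((m + 1 : ℕ) : ℤ) - 1 = m by push_cast; ring, invFactorial_natCast,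
      invFactorial_natCast, factorial_succ]
    push_cast
    field_simp

theorem sum_prod_invFactorial_update_sub_one {ι : Type*} [Fintype ι] [DecidableEq ι]
    (a : ι → ℤ) :
    ∑ r, ∏ i, invFactorial (update a r (a r - 1) i) =
      ((∑ i, a i : ℤ) : ℚ) * ∏ i, invFactorial (a i) := by
  push_cast
  rw [Finset.sum_mul]
  refine Finset.sum_congr rfl fun r _ => ?_
  rw [Fintype.prod_eq_mul_prod_compl r,
    Fintype.prod_eq_mul_prod_compl r (fun i => invFactorial (a i)),
    update_self, invFactorial_sub_one, mul_assoc]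
  congr 2
  refine Finset.prod_congr rfl fun i hi => ?_
  rw [update_of_ne (by simpa using hi)]

section AitkenMatrix

variable {k : ℕ}

-- The transpose of Aitken's matrix `(1 / (λ_i - ν_j - i + j)!)`, oriented so that
-- `Matrix.det_apply'` produces the products of the statement.
def aitkenMatrix (l n : Fin k → ℤ) : Matrix (Fin k) (Fin k) ℚ :=
  Matrix.of fun i j => invFactorial (l j + i - n i - j)

theorem det_aitkenMatrix (l n : Fin k → ℤ) :
    (aitkenMatrix l n).det =
      ∑ σ : Perm (Fin k),
        ((Perm.sign σ : ℤ) : ℚ) * ∏ i, invFactorial (l i + σ i - n (σ i) - i) := by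
  simp [Matrix.det_apply', aitkenMatrix]

theorem sum_det_aitkenMatrix_update_sub_one (l n : Fin k → ℤ) :
    ∑ r, (aitkenMatrix (update l r (l r - 1)) n).det =
      ((∑ i, l i - ∑ i, n i : ℤ) : ℚ) * (aitkenMatrix l n).det := by
  simp only [det_aitkenMatrix, Finset.mul_sum]
  rw [Finset.sum_comm]
  refine Finset.sum_congr rfl fun σ _ => ?_
  set a : Fin k → ℤ := fun i => l i + σ i - n (σ i) - i
  have hupdate :
      ∀ r i, update l r (l r - 1) i + σ i - n (σ i) - i = update a r (a r - 1) i := by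
    intro r i
    rcases eq_or_ne i r with rfl | hi
    · simp [a]; ring
    · simp [a, update_of_ne hi]
  have hsum : ∑ i, a i = ∑ i, l i - ∑ i, n i := by
    simp only [a, Finset.sum_sub_distrib, Finset.sum_add_distrib, Equiv.sum_comp σ n,
      Equiv.sum_comp σ (fun i : Fin k => ((i : ℕ) : ℤ))]
    ring
  simp only [hupdate, ← Finset.mul_sum, sum_prod_invFactorial_update_sub_one, hsum]
  ring

theorem det_aitkenMatrix_update_sub_one_of_succ_eq (l n : Fin k → ℤ) {r s : Fin k}
    (hs : (s : ℕ) = r + 1) (h : l s = l r) :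
    (aitkenMatrix (update l r (l r - 1)) n).det = 0 := by
  have hsr : s ≠ r := fun h => by omega
  refine Matrix.det_zero_of_column_eq (i := r) (j := s) hsr.symm fun i => ?_
  simp only [aitkenMatrix, Matrix.of_apply, update_self, update_of_ne hsr, h, hs]
  congr 1
  push_cast
  ring

theorem Matrix.det_eq_zero_of_forall_le_le {R : Type*} [CommRing R] (M : Matrix (Fin k) (Fin k) R)
    (r : Fin k) (h : ∀ i j, i ≤ r → r ≤ j → M i j = 0) : M.det = 0 := by
  rw [Matrix.det_apply]
  refine Finset.sum_eq_zero fun σ _ => ?_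
  obtain ⟨j, hrj, hjr⟩ : ∃ j, r ≤ j ∧ σ j ≤ r := by
    by_contra! hσ
    have hmaps : (Finset.Ici r).image σ ⊆ Finset.Ioi r := by
      simpa [Finset.image_subset_iff] using fun j hj => hσ j hj
    have := Finset.card_le_card hmaps
    rw [Finset.card_image_of_injective _ σ.injective, Fin.card_Ici, Fin.card_Ioi] at this
    omega
  rw [Finset.prod_eq_zero (f := fun j => M (σ j) j) (Finset.mem_univ j) (h _ _ hjr hrj), smul_zero]

theorem det_aitkenMatrix_update_sub_one_of_eq {l n : Fin k → ℤ} (hl : Antitone l)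
    (hn : Antitone n) {r : Fin k} (h : l r = n r) :
    (aitkenMatrix (update l r (l r - 1)) n).det = 0 := by
  refine Matrix.det_eq_zero_of_forall_le_le _ r fun i j hir hrj => invFactorial_of_neg ?_
  have hni := hn hir
  have hir' : (i : ℕ) ≤ r := hir
  rcases eq_or_ne j r with rfl | hjr
  · rw [update_self]; omega
  · have hrj' : (r : ℕ) < j := lt_of_le_of_ne hrj (fun h => hjr (Fin.ext h).symm)
    have hlj := hl hrj
    rw [update_of_ne hjr]; omega

theorem det_aitkenMatrix_self {l : Fin k → ℤ} (hl : Antitone l) :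
    (aitkenMatrix l l).det = 1 := by
  rw [Matrix.det_of_isLowerTriangular (aitkenMatrix l l) fun i j hij => invFactorial_of_neg ?_]
  · simp [aitkenMatrix, invFactorial_zero]
  · have hij' : (i : ℕ) < j := hij
    have := hl hij'.le
    omega

end AitkenMatrix

def IsStandardFilling (S : Set (ℕ × ℕ)) (n : ℕ) (T : ℕ × ℕ → ℕ) : Prop :=
  (∀ c, c ∉ S → T c = 0) ∧
  Set.BijOn T S (Set.Icc 1 n) ∧
  (∀ i j, (i, j) ∈ S → (i, j + 1) ∈ S → T (i, j) < T (i, j + 1)) ∧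
  (∀ i j, (i, j) ∈ S → (i + 1, j) ∈ S → T (i, j) < T (i + 1, j))

theorem skewCount_eq_ncard (lam nu : List ℕ) :
    skewCount lam nu =
      {T | IsStandardFilling (skewCells lam nu) (lam.sum - nu.sum) T}.ncard :=
  rfl

namespace IsStandardFilling

variable {S : Set (ℕ × ℕ)} {n : ℕ} {T : ℕ × ℕ → ℕ} {c : ℕ × ℕ}

theorem mem_of_ne_zero (hT : IsStandardFilling S n T) (hc : T c ≠ 0) : c ∈ S :=
  not_imp_comm.mp (hT.1 c) hc

theorem apply_le (hT : IsStandardFilling S n T) (d : ℕ × ℕ) : T d ≤ n := by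
  by_cases hd : d ∈ S
  · exact (hT.2.1.mapsTo hd).2
  · rw [hT.1 d hd]; exact Nat.zero_le n

theorem eq_of_apply_eq_of_ne_zero (hT : IsStandardFilling S n T) {d : ℕ × ℕ} (h : T c = T d)
    (h0 : T c ≠ 0) : c = d :=
  hT.2.1.injOn (hT.mem_of_ne_zero h0) (hT.mem_of_ne_zero (h ▸ h0)) h

theorem right_notMem (hT : IsStandardFilling S n T) (hc : T c = n) (hn : n ≠ 0) :
    (c.1, c.2 + 1) ∉ S := fun h =>
  (hT.2.2.1 c.1 c.2 (hT.mem_of_ne_zero (hc ▸ hn)) h).not_ge (hc ▸ hT.apply_le _)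

theorem below_notMem (hT : IsStandardFilling S n T) (hc : T c = n) (hn : n ≠ 0) :
    (c.1 + 1, c.2) ∉ S := fun h =>
  (hT.2.2.2 c.1 c.2 (hT.mem_of_ne_zero (hc ▸ hn)) h).not_ge (hc ▸ hT.apply_le _)

theorem update_zero (hT : IsStandardFilling S (n + 1) T) (hc : T c = n + 1) :
    IsStandardFilling (S \ {c}) n (update T c 0) := by
  have hcS : c ∈ S := hT.mem_of_ne_zero (by omega)
  have heq : Set.EqOn T (update T c 0) (S \ {c}) := fun d hd => (update_of_ne hd.2 _ _).symm
  obtain ⟨hzero, hbij, hrow, hcol⟩ := hT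
  have hIcc : Set.Icc 1 (n + 1) \ {T c} = Set.Icc 1 n := by
    ext m; simp only [hc, Set.mem_sdiff, Set.mem_Icc, Set.mem_singleton_iff]; omega
  refine ⟨fun d hd => ?_, hIcc ▸ (hbij.sdiff_singleton hcS).congr heq,
    fun i j hd he => heq hd ▸ heq he ▸ hrow i j hd.1 he.1,
    fun i j hd he => heq hd ▸ heq he ▸ hcol i j hd.1 he.1⟩
  rcases eq_or_ne d c with rfl | hdc
  · exact update_self _ _ _
  · rw [update_of_ne hdc]; exact hzero d fun h => hd ⟨h, hdc⟩

theorem update_of_corner (hT : IsStandardFilling (S \ {c}) n T) (hc : c ∈ S)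
    (hright : (c.1, c.2 + 1) ∉ S) (hbelow : (c.1 + 1, c.2) ∉ S) :
    IsStandardFilling S (n + 1) (update T c (n + 1)) := by
  set T' := update T c (n + 1)
  have heq : Set.EqOn T T' (S \ {c}) := fun d hd => (update_of_ne hd.2 _ _).symm
  have hT'c : T' c = n + 1 := update_self _ _ _
  obtain ⟨hzero, hbij, hrow, hcol⟩ := hT
  have hlt : ∀ d ∈ S \ {c}, T' d < T' c := fun d hd => by
    rw [← heq hd, hT'c]; exact Nat.lt_succ_of_le (hbij.mapsTo hd).2
  have hbij' : Set.BijOn T' (insert c (S \ {c})) (insert (T' c) (Set.Icc 1 n)) :=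
    (hbij.congr heq).insert (by rw [hT'c]; simp)
  rw [Set.insert_sdiff_singleton, Set.insert_eq_of_mem hc, hT'c,
    Set.insert_Icc_right_eq_Icc_add_one (by omega)] at hbij'
  refine ⟨fun d hd => ?_, hbij', fun i j hd he => ?_, fun i j hd he => ?_⟩
  · rw [show T' d = T d from update_of_ne (fun h : d = c => hd (h ▸ hc)) _ _]
    exact hzero d fun h => hd h.1
  · rcases eq_or_ne (i, j) c with rfl | hdc
    · exact absurd he hright
    rcases eq_or_ne (i, j + 1) c with hec | hec
    · exact hec ▸ hlt _ ⟨hd, hdc⟩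
    · rw [← heq ⟨hd, hdc⟩, ← heq ⟨he, hec⟩]; exact hrow i j ⟨hd, hdc⟩ ⟨he, hec⟩
  · rcases eq_or_ne (i, j) c with rfl | hdc
    · exact absurd he hbelow
    rcases eq_or_ne (i + 1, j) c with hec | hec
    · exact hec ▸ hlt _ ⟨hd, hdc⟩
    · rw [← heq ⟨hd, hdc⟩, ← heq ⟨he, hec⟩]; exact hcol i j ⟨hd, hdc⟩ ⟨he, hec⟩

end IsStandardFilling

theorem finite_setOf_isStandardFilling {S : Set (ℕ × ℕ)} (hS : S.Finite) (n : ℕ) :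
    {T | IsStandardFilling S n T}.Finite := by
  have := hS.to_subtype
  refine Set.Finite.of_finite_image
    (f := fun (T : ℕ × ℕ → ℕ) (c : S) => Fin.ofNat (n + 1) (T c))
    (Set.toFinite _) fun T₁ h₁ T₂ h₂ h => funext fun d => ?_
  by_cases hd : d ∈ S
  · have := congrArg Fin.val (congrFun h ⟨d, hd⟩)
    simpa [Fin.val_ofNat, Nat.mod_eq_of_lt (Nat.lt_succ_of_le (h₁.apply_le d)),
      Nat.mod_eq_of_lt (Nat.lt_succ_of_le (h₂.apply_le d))] using this
  · rw [h₁.1 d hd, h₂.1 d hd]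

theorem ncard_setOf_isStandardFilling_apply_eq {S : Set (ℕ × ℕ)} {c : ℕ × ℕ} (n : ℕ)
    (hc : c ∈ S) (hright : (c.1, c.2 + 1) ∉ S) (hbelow : (c.1 + 1, c.2) ∉ S) :
    {T | IsStandardFilling S (n + 1) T ∧ T c = n + 1}.ncard =
      {T | IsStandardFilling (S \ {c}) n T}.ncard := by
  have himage : {T | IsStandardFilling S (n + 1) T ∧ T c = n + 1} =
      (fun T => update T c (n + 1)) '' {T | IsStandardFilling (S \ {c}) n T} := by
    ext T
    constructor
    · rintro ⟨hT, hTc⟩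
      exact ⟨update T c 0, hT.update_zero hTc, by simp [← hTc]⟩
    · rintro ⟨T, hT, rfl⟩
      exact ⟨hT.update_of_corner hc hright hbelow, update_self _ _ _⟩
  refine himage ▸ Set.InjOn.ncard_image fun T₁ h₁ T₂ h₂ h => funext fun d => ?_
  rcases eq_or_ne d c with rfl | hdc
  · rw [h₁.1 d (fun h => h.2 rfl), h₂.1 d (fun h => h.2 rfl)]
  · simpa [update_of_ne hdc] using congrFun h d

theorem setOf_isStandardFilling_apply_eq_eq_empty {S : Set (ℕ × ℕ)} {c : ℕ × ℕ} (n : ℕ)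
    (h : c ∈ S → (c.1 + 1, c.2) ∈ S) :
    {T | IsStandardFilling S (n + 1) T ∧ T c = n + 1} = ∅ :=
  Set.eq_empty_of_forall_notMem fun _ ⟨hT, hTc⟩ =>
    hT.below_notMem hTc (by omega) (h (hT.mem_of_ne_zero (by omega)))

theorem ncard_setOf_isStandardFilling_eq_sum {S : Set (ℕ × ℕ)} (hS : S.Finite) (n : ℕ)
    {ι : Type*} [Fintype ι] {cell : ι → ℕ × ℕ} (hcell : Injective cell)
    (hmax : ∀ T, IsStandardFilling S (n + 1) T → ∃ i, T (cell i) = n + 1) :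
    {T | IsStandardFilling S (n + 1) T}.ncard =
      ∑ i, {T | IsStandardFilling S (n + 1) T ∧ T (cell i) = n + 1}.ncard := by
  have hunion : {T | IsStandardFilling S (n + 1) T} =
      ⋃ i, {T | IsStandardFilling S (n + 1) T ∧ T (cell i) = n + 1} := by
    ext T
    simp only [Set.mem_ofPred_eq, Set.mem_iUnion]
    exact ⟨fun hT => (hmax T hT).imp fun _ h => ⟨hT, h⟩, fun ⟨_, hT, _⟩ => hT⟩
  rw [hunion, Set.ncard_iUnion_of_finite, finsum_eq_sum_of_fintype]
  · exact fun i => (finite_setOf_isStandardFilling hS _).subset fun T hT => hT.1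
  · refine fun i j hij => Set.disjoint_left.mpr fun T ⟨hT, hi⟩ ⟨_, hj⟩ =>
      hij (hcell (hT.eq_of_apply_eq_of_ne_zero (hi.trans hj.symm) (by omega)))

theorem isStandardFilling_empty_iff {T : ℕ × ℕ → ℕ} :
    IsStandardFilling ∅ 0 T ↔ T = 0 := by
  refine ⟨fun hT => funext fun c => hT.1 c (Set.notMem_empty c), ?_⟩
  rintro rfl
  refine ⟨fun _ _ => rfl, ?_, by simp, by simp⟩
  rw [Set.Icc_eq_empty (by omega)]
  exact Set.bijOn_empty _

theorem skewCells_self (lam : List ℕ) : skewCells lam lam = ∅ :=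
  Set.eq_empty_of_forall_notMem fun _ hc => hc.2.2.1.not_ge hc.2.2.2

theorem skewCount_self (lam : List ℕ) : skewCount lam lam = 1 := by
  rw [skewCount_eq_ncard, skewCells_self, Nat.sub_self, Set.ncard_eq_one]
  exact ⟨0, Set.ext fun _ => isStandardFilling_empty_iff⟩

theorem Antitone.update_sub_one {ι : Type*} [PartialOrder ι] [DecidableEq ι] {f : ι → ℕ}
    (hf : Antitone f) {r : ι} (hr : ∀ s, r < s → f s < f r) :
    Antitone (update f r (f r - 1)) := by
  intro a b hab
  rcases eq_or_ne a r with rfl | har <;> rcases eq_or_ne b a with rfl | hba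
  · exact le_rfl
  · rw [update_self, update_of_ne hba]
    have := hr b (lt_of_le_of_ne hab hba.symm)
    omega
  · exact le_rfl
  · rcases eq_or_ne b r with rfl | hbr
    · rw [update_self, update_of_ne har]
      have := hf hab
      omega
    · rw [update_of_ne har, update_of_ne hbr]
      exact hf hab

theorem sum_update_sub_one {ι : Type*} [Fintype ι] [DecidableEq ι] (f : ι → ℕ) {r : ι}
    (h : 0 < f r) : ∑ i, update f r (f r - 1) i = ∑ i, f i - 1 := by
  rw [Finset.sum_update_of_mem (Finset.mem_univ r), Fintype.sum_eq_add_sum_compl r f,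
    Finset.sdiff_eq_inter_compl, Finset.univ_inter]
  omega

section OfFn

variable {k : ℕ}

theorem rowLen_ofFn_succ (f : Fin k → ℕ) (r : Fin k) : rowLen (List.ofFn f) (r + 1) = f r := by
  simp [rowLen]

theorem mem_skewCells_ofFn {lam nu : Fin k → ℕ} {c : ℕ × ℕ} :
    c ∈ skewCells (List.ofFn lam) (List.ofFn nu) ↔
      ∃ r : Fin k, c.1 = r + 1 ∧ nu r < c.2 ∧ c.2 ≤ lam r := by
  obtain ⟨i, j⟩ := c
  constructor
  · rintro ⟨h1, h2, h3, h4⟩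
    rw [List.length_ofFn] at h2
    obtain ⟨r, rfl⟩ : ∃ r : Fin k, i = r + 1 := ⟨⟨i - 1, by omega⟩, by simp; omega⟩
    rw [rowLen_ofFn_succ] at h3 h4
    exact ⟨r, rfl, h3, h4⟩
  · rintro ⟨r, rfl, h3, h4⟩
    refine ⟨by omega, by simp, ?_, ?_⟩ <;> rwa [rowLen_ofFn_succ]

theorem finite_skewCells_ofFn (lam nu : Fin k → ℕ) :
    (skewCells (List.ofFn lam) (List.ofFn nu)).Finite := by
  refine (Set.finite_iUnion fun r : Fin k =>
    (Set.finite_singleton ((r : ℕ) + 1)).prod (Set.finite_Iic (lam r))).subset fun c hc => ?_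
  obtain ⟨r, h1, -, h2⟩ := mem_skewCells_ofFn.mp hc
  exact Set.mem_iUnion.mpr ⟨r, h1, h2⟩

theorem skewCells_ofFn_update_sub_one {lam nu : Fin k → ℕ} {r : Fin k} (h : nu r < lam r) :
    skewCells (List.ofFn (update lam r (lam r - 1))) (List.ofFn nu) =
      skewCells (List.ofFn lam) (List.ofFn nu) \ {((r : ℕ) + 1, lam r)} := by
  ext ⟨i, j⟩
  simp only [Set.mem_sdiff, mem_skewCells_ofFn, Set.mem_singleton_iff, Prod.mk.injEq]
  constructor
  · rintro ⟨s, rfl, h1, h2⟩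
    rcases eq_or_ne s r with rfl | hs
    · rw [update_self] at h2
      exact ⟨⟨s, rfl, h1, by omega⟩, by omega⟩
    · rw [update_of_ne hs] at h2
      exact ⟨⟨s, rfl, h1, h2⟩, fun ⟨h, _⟩ => hs (Fin.ext (by omega))⟩
  · rintro ⟨⟨s, rfl, h1, h2⟩, hne⟩
    refine ⟨s, rfl, h1, ?_⟩
    rcases eq_or_ne s r with rfl | hs
    · rw [update_self]; omega
    · rwa [update_of_ne hs]

theorem exists_apply_eq_of_isStandardFilling_skewCells_ofFn {lam nu : Fin k → ℕ} {n : ℕ}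
    {T : ℕ × ℕ → ℕ}
    (hT : IsStandardFilling (skewCells (List.ofFn lam) (List.ofFn nu)) (n + 1) T) :
    ∃ r : Fin k, T ((r : ℕ) + 1, lam r) = n + 1 := by
  obtain ⟨c, hc, hTc⟩ :=
    hT.2.1.surjOn (Set.right_mem_Icc.mpr (by omega) : n + 1 ∈ Set.Icc 1 (n + 1))
  obtain ⟨r, hr, hnu, hle⟩ := mem_skewCells_ofFn.mp hc
  have hend : c.2 = lam r := by
    by_contra hne
    exact hT.right_notMem hTc (by omega) (mem_skewCells_ofFn.mpr ⟨r, hr, by omega, by omega⟩)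
  exact ⟨r, by rw [← hr, ← hend]; exact hTc⟩

end OfFn

section Main

variable {k : ℕ} {lam nu : Fin k → ℕ}

theorem natCast_update_sub_one {r : Fin k} (h : 1 ≤ lam r) :
    (fun i => (update lam r (lam r - 1) i : ℤ)) = update (fun i => (lam i : ℤ)) r (lam r - 1) :=
  funext fun i => by
    rcases eq_or_ne i r with rfl | hi
    · simp; omega
    · simp [hi]

theorem ncard_setOf_apply_eq_skewCount_update {m : ℕ}
    (hN : ∑ i, lam i - ∑ i, nu i = m + 1) {r : Fin k} (hr : nu r < lam r)
    (hlt : ∀ s, r < s → lam s < lam r) :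
    {T | IsStandardFilling (skewCells (List.ofFn lam) (List.ofFn nu)) (m + 1) T ∧
        T ((r : ℕ) + 1, lam r) = m + 1}.ncard =
      skewCount (List.ofFn (update lam r (lam r - 1))) (List.ofFn nu) := by
  have hright : ((r : ℕ) + 1, lam r + 1) ∉ skewCells (List.ofFn lam) (List.ofFn nu) :=
    fun h => by
      obtain ⟨s, hs, -, hle⟩ := mem_skewCells_ofFn.mp h
      obtain rfl : s = r := Fin.ext (by simp at hs; omega)
      omega
  have hbelow : ((r : ℕ) + 1 + 1, lam r) ∉ skewCells (List.ofFn lam) (List.ofFn nu) :=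
    fun h => by
      obtain ⟨s, hs, -, hle⟩ := mem_skewCells_ofFn.mp h
      exact (hlt s (Fin.lt_def.mpr (by simp at hs; omega))).not_ge hle
  have hsum : (List.ofFn (update lam r (lam r - 1))).sum - (List.ofFn nu).sum = m := by
    rw [List.sum_ofFn, List.sum_ofFn, sum_update_sub_one lam (by omega)]
    omega
  rw [ncard_setOf_isStandardFilling_apply_eq m (mem_skewCells_ofFn.mpr ⟨r, rfl, hr, le_rfl⟩)
    hright hbelow, ← skewCells_ofFn_update_sub_one hr, ← hsum, skewCount_eq_ncard]

theorem ncard_setOf_apply_eq_factorial_mul_det (hlam : Antitone lam) (hnu : Antitone nu)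
    (hsub : ∀ i, nu i ≤ lam i) {m : ℕ} (hN : ∑ i, lam i - ∑ i, nu i = m + 1)
    (ih : ∀ lam' : Fin k → ℕ, Antitone lam' → (∀ i, nu i ≤ lam' i) →
      ∑ i, lam' i - ∑ i, nu i = m →
      (skewCount (List.ofFn lam') (List.ofFn nu) : ℚ) =
        m ! * (aitkenMatrix (fun i => (lam' i : ℤ)) (fun i => (nu i : ℤ))).det)
    (r : Fin k) :
    ({T | IsStandardFilling (skewCells (List.ofFn lam) (List.ofFn nu)) (m + 1) T ∧
        T ((r : ℕ) + 1, lam r) = m + 1}.ncard : ℚ) =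
      m ! * (aitkenMatrix (update (fun i => (lam i : ℤ)) r (lam r - 1))
        (fun i => (nu i : ℤ))).det := by
  -- Row `r` ends in a corner iff `ν_r < λ_r` and `λ_{r+1} < λ_r`; otherwise both sides vanish.
  rcases (hsub r).lt_or_eq with hr | hr
  · by_cases hstep : ∃ s : Fin k, (s : ℕ) = r + 1 ∧ lam s = lam r
    · obtain ⟨s, hs, hls⟩ := hstep
      have hbelow : ((r : ℕ) + 1 + 1, lam r) ∈ skewCells (List.ofFn lam) (List.ofFn nu) :=
        mem_skewCells_ofFn.mpr ⟨s, by simp [hs],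
          lt_of_le_of_lt (hnu (Fin.le_def.mpr (by omega))) hr, hls.ge⟩
      rw [det_aitkenMatrix_update_sub_one_of_succ_eq _ _ hs (by simp [hls]), mul_zero,
        setOf_isStandardFilling_apply_eq_eq_empty m fun _ => hbelow, Set.ncard_empty,
        Nat.cast_zero]
    · push Not at hstep
      have hlt : ∀ s, r < s → lam s < lam r := fun s hrs => by
        have hrs' : (r : ℕ) < s := hrs
        let t : Fin k := ⟨r + 1, by omega⟩
        have := hstep t rfl
        have := hlam (show r ≤ t from Fin.le_def.mpr (by simp [t]))
        have := hlam (show t ≤ s from Fin.le_def.mpr (by simp [t]; omega))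
        omega
      have hsub' : ∀ i, nu i ≤ update lam r (lam r - 1) i := fun i => by
        rcases eq_or_ne i r with rfl | hi
        · rw [update_self]; omega
        · rw [update_of_ne hi]; exact hsub i
      rw [ncard_setOf_apply_eq_skewCount_update hN hr hlt, ih _ (hlam.update_sub_one hlt) hsub'
          (by rw [sum_update_sub_one lam (by omega)]; omega),
        natCast_update_sub_one (by omega)]
  · have hcS : ((r : ℕ) + 1, lam r) ∉ skewCells (List.ofFn lam) (List.ofFn nu) := fun hc => by
      obtain ⟨s, hs, h1, -⟩ := mem_skewCells_ofFn.mp hc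
      obtain rfl : s = r := Fin.ext (by simp at hs; omega)
      omega
    rw [det_aitkenMatrix_update_sub_one_of_eq (fun a b h => Nat.cast_le.mpr (hlam h))
        (fun a b h => Nat.cast_le.mpr (hnu h)) (by simp [hr]), mul_zero,
      setOf_isStandardFilling_apply_eq_eq_empty m fun h => absurd h hcS,
      Set.ncard_empty, Nat.cast_zero]

theorem skewCount_ofFn_eq_factorial_mul_det (hlam : Antitone lam) (hnu : Antitone nu)
    (hsub : ∀ i, nu i ≤ lam i) :
    (skewCount (List.ofFn lam) (List.ofFn nu) : ℚ) =
      (∑ i, lam i - ∑ i, nu i)! *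
        (aitkenMatrix (fun i => (lam i : ℤ)) (fun i => (nu i : ℤ))).det := by
  have hle : ∑ i, nu i ≤ ∑ i, lam i := Finset.sum_le_sum fun i _ => hsub i
  induction hN : ∑ i, lam i - ∑ i, nu i generalizing lam with
  | zero =>
    obtain rfl : lam = nu := funext fun i =>
      ((Finset.sum_eq_sum_iff_of_le fun i _ => hsub i).mp (by omega) i (Finset.mem_univ i)).symm
    rw [skewCount_self, det_aitkenMatrix_self fun a b h => Nat.cast_le.mpr (hlam h)]
    simp
  | succ m ih =>
    have hsumL : (List.ofFn lam).sum - (List.ofFn nu).sum = m + 1 := by simpa [List.sum_ofFn]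
    have hsumZ : ((∑ i, (lam i : ℤ) - ∑ i, (nu i : ℤ) : ℤ) : ℚ) = m + 1 := by
      rw [← Nat.cast_sum, ← Nat.cast_sum, ← Nat.cast_sub hle, hN]
      push_cast; ring
    rw [skewCount_eq_ncard, hsumL,
      ncard_setOf_isStandardFilling_eq_sum (finite_skewCells_ofFn lam nu) m
        (cell := fun r : Fin k => ((r : ℕ) + 1, lam r))
        (fun r s h => Fin.ext (by simpa using congrArg Prod.fst h))
        fun T hT => exists_apply_eq_of_isStandardFilling_skewCells_ofFn hT,
      Nat.cast_sum, factorial_succ, Nat.cast_mul, Nat.cast_succ, ← hsumZ, mul_comm _ (m ! : ℚ),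
      mul_assoc, ← sum_det_aitkenMatrix_update_sub_one, Finset.mul_sum]
    exact Finset.sum_congr rfl fun r _ => ncard_setOf_apply_eq_factorial_mul_det hlam hnu hsub hN
      (fun lam' hlam' hsub' hN' => ih hlam' hsub' (Finset.sum_le_sum fun i _ => hsub' i) hN') r

end Main

/-- The Aitken–Feit–Steinberg determinantal formula (via the reflection principle):
for partitions `ν ⊆ λ` with at most `k` parts (padded with zeros),
`f^{λ/ν} = ∑_{σ ∈ S_k} sgn(σ) · (|λ|−|ν|)! / ∏_i (λ_i − ν_{σ(i)} + σ(i) − i)!`,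
where any summand containing the factorial of a negative integer is `0`. -/
theorem skew_syt_count_det (k : ℕ) (lam nu : Fin k → ℕ)
    (hlam : Antitone lam) (hnu : Antitone nu) (hsub : ∀ i, nu i ≤ lam i) :
    (skewCount (List.ofFn lam) (List.ofFn nu) : ℚ) =
      ∑ σ : Equiv.Perm (Fin k), ((Equiv.Perm.sign σ : ℤ) : ℚ) *
        (if ∀ i : Fin k, (nu (σ i) : ℤ) + (i : ℕ) ≤ (lam i : ℤ) + ((σ i : ℕ) : ℤ)
         then (Nat.factorial (∑ i, lam i - ∑ i, nu i) : ℚ) /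
           ∏ i : Fin k,
             (Nat.factorial ((lam i : ℤ) + ((σ i : ℕ) : ℤ) - (nu (σ i) : ℤ) - ((i : ℕ) : ℤ)).toNat : ℚ)
         else 0) := by
  rw [skewCount_ofFn_eq_factorial_mul_det hlam hnu hsub, det_aitkenMatrix, Finset.mul_sum]
  refine Finset.sum_congr rfl fun σ _ => ?_
  split_ifs with h
  · rw [Finset.prod_congr rfl fun i _ => invFactorial_of_nonneg (by linarith [h i]),
      Finset.prod_inv_distrib, div_eq_mul_inv]
    ring
  · obtain ⟨i, hi⟩ := not_forall.mp h
    rw [Finset.prod_eq_zero (Finset.mem_univ i) (invFactorial_of_neg (by omega)), mul_zero,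
      mul_zero]
end
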